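/- arXiv:2101.02142 — 6 statements merged into one kernel-verified Lean document; each statement's English description precedes it below -/
import Mathlib

section
/- Let R be a commutative ring, P ∈ R[X] a monic polynomial of degree n with at least 2 nonzero coefficients, and let γ ∈ (0,1] be such that the second degree of P (the degree of P − X^n) is at most (1−γ)·n. Let Q ∈ R[X] be a polynomial of degree at most n−1+k for some k ≥ 0. Then the remainder Q mod P has at most #Q·(#P−1)^{⌈k/(γn)⌉} nonzero coefficients. -/
/-!
Modulo a monic `P` of degree `n` and second degree `d`, `X ^ n ≡ -P.eraseLead`, so reducing a
monomial `X ^ i` with `i ≥ n` replaces it by at most `#P - 1` monomials of degree at most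
`i - (n - d)`. Since `n - d ≥ γ n`, after `⌈k / (γ n)⌉` such rounds every degree is below `n`.
Reduction modulo `P` is linear, so the bound for `Q` is the sum of the bounds for its monomials.
-/

open Finset Polynomial

namespace Polynomial

variable {R : Type*}

theorem card_support_finsetSum_le [Semiring R] {ι : Type*} (s : Finset ι) (f : ι → R[X]) :
    #(∑ i ∈ s, f i).support ≤ ∑ i ∈ s, #(f i).support := by
  classical
  induction s using Finset.induction_on with
  | empty => simp
  | insert a s ha ih =>
    rw [sum_insert ha, sum_insert ha]
    calc #(f a + ∑ i ∈ s, f i).support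
        ≤ #((f a).support ∪ (∑ i ∈ s, f i).support) := card_le_card support_add
      _ ≤ #(f a).support + #(∑ i ∈ s, f i).support := card_union_le _ _
      _ ≤ #(f a).support + ∑ i ∈ s, #(f i).support := by gcongr

variable [CommRing R] {P Q : R[X]}

theorem card_support_modByMonic_le_mul {b : ℕ}
    (h : ∀ i ∈ Q.support, #(X ^ i %ₘ P).support ≤ b) :
    #(Q %ₘ P).support ≤ #Q.support * b := by
  have hsum : Q %ₘ P = ∑ i ∈ Q.support, Q.coeff i • (X ^ i %ₘ P) := by
    conv_lhs => rw [Q.as_sum_support_C_mul_X_pow]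
    simp only [← smul_eq_C_mul, ← modByMonicHom_apply, map_sum, map_smul]
  calc #(Q %ₘ P).support
      ≤ ∑ i ∈ Q.support, #(Q.coeff i • (X ^ i %ₘ P)).support := hsum ▸ card_support_finsetSum_le _ _
    _ ≤ ∑ i ∈ Q.support, b := sum_le_sum fun i hi => (card_le_card (support_smul _ _)).trans (h i hi)
    _ = #Q.support * b := by rw [sum_const, smul_eq_mul]

theorem X_pow_modByMonic_of_lt [Nontrivial R] (hP : P.Monic) {i : ℕ} (hi : i < P.natDegree) :
    X ^ i %ₘ P = X ^ i :=
  (modByMonic_eq_self_iff hP).mpr <| by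
    rw [degree_X_pow, degree_eq_natDegree hP.ne_zero]
    exact_mod_cast hi

theorem X_pow_natDegree_add_modByMonic (hP : P.Monic) (i : ℕ) :
    X ^ (P.natDegree + i) %ₘ P = -(X ^ i * P.eraseLead) %ₘ P := by
  refine modByMonic_eq_of_dvd_sub hP ⟨X ^ i, ?_⟩
  conv_rhs => rw [← P.eraseLead_add_monomial_natDegree_leadingCoeff, hP.leadingCoeff]
  rw [monomial_one_right_eq_X_pow]
  ring

theorem card_support_X_pow_modByMonic_le_pow (hP : P.Monic) (hPsp : 2 ≤ #P.support) {j i : ℕ}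
    (hi : i < P.natDegree + j * (P.natDegree - P.eraseLead.natDegree)) :
    #(X ^ i %ₘ P).support ≤ (#P.support - 1) ^ j := by
  have : Nontrivial R := by
    by_contra h
    have : Subsingleton R := not_nontrivial_iff_subsingleton.mp h
    simp [Subsingleton.elim P 0] at hPsp
  have hc : 1 ≤ #P.support - 1 := by omega
  induction j generalizing i with
  | zero =>
    rw [X_pow_modByMonic_of_lt hP (by simpa using hi), support_X_pow, card_singleton, pow_zero]
  | succ j ih =>
    rcases lt_or_ge i P.natDegree with hin | hin
    · rw [X_pow_modByMonic_of_lt hP hin, support_X_pow, card_singleton]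
      exact Nat.one_le_pow _ _ hc
    obtain ⟨i, rfl⟩ := Nat.exists_eq_add_of_le hin
    rw [X_pow_natDegree_add_modByMonic hP, pow_succ']
    refine (card_support_modByMonic_le_mul fun e he => ih ?_).trans ?_
    · have hlt := eraseLead_natDegree_lt hPsp
      calc e ≤ (-(X ^ i * P.eraseLead)).natDegree := le_natDegree_of_mem_supp e he
        _ ≤ i + P.eraseLead.natDegree := by
          rw [natDegree_neg]
          exact natDegree_mul_le.trans (by rw [natDegree_X_pow])
        _ < _ := by rw [Nat.succ_mul] at hi; omega
    · rw [support_neg, ← card_support_eraseLead]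
      refine Nat.mul_le_mul_right _ ?_
      calc #(X ^ i * P.eraseLead).support ≤ #(X ^ i : R[X]).support * #P.eraseLead.support :=
            card_support_mul_le
        _ = #P.eraseLead.support := by rw [support_X_pow, card_singleton, one_mul]

theorem card_support_modByMonic_le_mul_pow (hP : P.Monic) (hPsp : 2 ≤ #P.support) {j : ℕ}
    (hQ : Q.natDegree < P.natDegree + j * (P.natDegree - P.eraseLead.natDegree)) :
    #(Q %ₘ P).support ≤ #Q.support * (#P.support - 1) ^ j :=
  card_support_modByMonic_le_mul fun i hi =>
    card_support_X_pow_modByMonic_le_pow hP hPsp ((le_natDegree_of_mem_supp i hi).trans_lt hQ)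

end Polynomial

theorem sparsity_modByMonic_le_general {R : Type*} [CommRing R] (n k : ℕ) (γ : ℝ)
    (P Q : Polynomial R) (hP : P.Monic) (hPdeg : P.natDegree = n)
    (hPsp : 2 ≤ P.support.card) (hγ0 : 0 < γ)
    (hgap : ((P - X ^ n).natDegree : ℝ) ≤ (1 - γ) * n)
    (hQ : Q.natDegree ≤ n - 1 + k) :
    (Q %ₘ P).support.card ≤
      Q.support.card * (P.support.card - 1) ^ ⌈(k : ℝ) / (γ * n)⌉₊ := by
  have hsub : P - X ^ n = P.eraseLead := by
    rw [← self_sub_monomial_natDegree_leadingCoeff, hP.leadingCoeff, monomial_one_right_eq_X_pow,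
      hPdeg]
  rw [hsub] at hgap
  have hdn : P.eraseLead.natDegree < n := hPdeg ▸ eraseLead_natDegree_lt hPsp
  have hγn : 0 < γ * n := mul_pos hγ0 (by exact_mod_cast hdn.pos)
  have hk_real : (k : ℝ) ≤ ⌈(k : ℝ) / (γ * n)⌉₊ * ((n - P.eraseLead.natDegree : ℕ) : ℝ) := by
    rw [Nat.cast_sub hdn.le]
    calc (k : ℝ) = k / (γ * n) * (γ * n) := (div_mul_cancel₀ _ hγn.ne').symm
      _ ≤ ⌈(k : ℝ) / (γ * n)⌉₊ * (n - P.eraseLead.natDegree) := by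
        gcongr
        · exact Nat.le_ceil _
        · linarith
  refine card_support_modByMonic_le_mul_pow hP hPsp ?_
  rw [hPdeg]
  have hk : k ≤ ⌈(k : ℝ) / (γ * n)⌉₊ * (n - P.eraseLead.natDegree) := by exact_mod_cast hk_real
  omega

theorem sparsity_modByMonic_le {R : Type*} [CommRing R] (n k : ℕ) (γ : ℝ)
    (P Q : Polynomial R) (hP : P.Monic) (hPdeg : P.natDegree = n)
    (hPsp : 2 ≤ P.support.card) (hγ0 : 0 < γ) (hγ1 : γ ≤ 1)
    (hgap : ((P - X ^ n).natDegree : ℝ) ≤ (1 - γ) * n)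
    (hQ : Q.natDegree ≤ n - 1 + k) :
    (Q %ₘ P).support.card ≤
      Q.support.card * (P.support.card - 1) ^ ⌈(k : ℝ) / (γ * n)⌉₊ :=
  sparsity_modByMonic_le_general n k γ P Q hP hPdeg hPsp hγ0 hgap hQ
end

section
/- Let P ∈ ℤ[X] be a monic polynomial of degree n with at least 2 nonzero coefficients, and let γ ∈ (0,1] be such that the degree of P − X^n is at most (1−γ)·n. Let Q ∈ ℤ[X] be a polynomial of degree at most n−1+k for some k ≥ 0. Then ‖Q mod P‖ ≤ ‖Q‖·(#P·‖P‖)^{⌈k/(γn)⌉}. -/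
/-!
Write `n = deg P` and `P = X ^ n + E` with `E = P.eraseLead`, so that `deg E ≤ n - d` for a gap
`d ≥ γ n`. Splitting `Q = Q₀ + X ^ n Q₁` with `deg Q₀ < n`, the polynomial `Q₀ - E Q₁` is congruent
to `Q` modulo `P`, has degree smaller by at least `d`, and norm at most
`‖Q‖ (1 + #E ‖E‖) ≤ ‖Q‖ #P ‖P‖`. After `⌈k / (γ n)⌉` such steps the degree is below `n`, where
reduction modulo `P` does nothing.
-/

open Polynomial

/-- The norm of an integer polynomial: the maximum of the absolute values of its
coefficients (as a natural number). -/
noncomputable def polyNorm (F : Polynomial ℤ) : ℕ :=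
  F.support.sup fun i => (F.coeff i).natAbs

namespace Polynomial

variable {R : Type*} [Ring R]

theorem coeff_modByMonic_X_pow (p : R[X]) (n i : ℕ) :
    (p %ₘ X ^ n).coeff i = if i < n then p.coeff i else 0 := by
  nontriviality R
  split_ifs with hi
  · conv_rhs => rw [← modByMonic_add_div p (X ^ n)]
    simp [coeff_X_pow_mul', hi]
  · refine coeff_eq_zero_of_degree_lt ((degree_modByMonic_lt p (monic_X_pow n)).trans_le ?_)
    simpa using hi

theorem coeff_divByMonic_X_pow (p : R[X]) (n i : ℕ) :
    (p /ₘ X ^ n).coeff i = p.coeff (i + n) := by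
  conv_rhs => rw [← modByMonic_add_div p (X ^ n)]
  simp [coeff_modByMonic_X_pow, coeff_X_pow_mul]

theorem Monic.sub_X_pow_natDegree {P : R[X]} (hP : P.Monic) :
    P - X ^ P.natDegree = P.eraseLead := by
  rw [← self_sub_monomial_natDegree_leadingCoeff, hP.leadingCoeff, monomial_one_right_eq_X_pow]

end Polynomial

theorem natAbs_coeff_le_polyNorm (F : ℤ[X]) (i : ℕ) : (F.coeff i).natAbs ≤ polyNorm F := by
  by_cases h : i ∈ F.support
  · exact Finset.le_sup (f := fun i => (F.coeff i).natAbs) h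
  · simp [notMem_support_iff.mp h]

theorem polyNorm_le_of_forall_natAbs_coeff_le {F : ℤ[X]} {B : ℕ}
    (h : ∀ i, (F.coeff i).natAbs ≤ B) : polyNorm F ≤ B :=
  Finset.sup_le fun i _ => h i

@[simp]
theorem polyNorm_zero : polyNorm 0 = 0 := rfl

theorem polyNorm_neg (F : ℤ[X]) : polyNorm (-F) = polyNorm F := by
  simp [polyNorm]

theorem polyNorm_add_le (F G : ℤ[X]) : polyNorm (F + G) ≤ polyNorm F + polyNorm G :=
  polyNorm_le_of_forall_natAbs_coeff_le fun i =>
    (coeff_add F G i ▸ Int.natAbs_add_le _ _).trans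
      (add_le_add (natAbs_coeff_le_polyNorm F i) (natAbs_coeff_le_polyNorm G i))

theorem polyNorm_sub_le (F G : ℤ[X]) : polyNorm (F - G) ≤ polyNorm F + polyNorm G := by
  simpa [sub_eq_add_neg, polyNorm_neg] using polyNorm_add_le F (-G)

theorem polyNorm_monomial_mul_le (i : ℕ) (a : ℤ) (F : ℤ[X]) :
    polyNorm (monomial i a * F) ≤ a.natAbs * polyNorm F := by
  refine polyNorm_le_of_forall_natAbs_coeff_le fun j => ?_
  rw [← C_mul_X_pow_eq_monomial, mul_assoc, coeff_C_mul, coeff_X_pow_mul', Int.natAbs_mul]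
  split_ifs
  · exact Nat.mul_le_mul_left _ (natAbs_coeff_le_polyNorm F _)
  · simp

theorem polyNorm_mul_le (F G : ℤ[X]) :
    polyNorm (F * G) ≤ F.support.card * polyNorm F * polyNorm G := by
  conv_lhs => rw [F.as_sum_support, Finset.sum_mul]
  calc polyNorm (∑ i ∈ F.support, monomial i (F.coeff i) * G)
      ≤ ∑ i ∈ F.support, polyNorm (monomial i (F.coeff i) * G) :=
        Finset.le_sum_of_subadditive _ polyNorm_zero.le polyNorm_add_le _ _
    _ ≤ ∑ _i ∈ F.support, polyNorm F * polyNorm G := Finset.sum_le_sum fun i _ =>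
        (polyNorm_monomial_mul_le _ _ _).trans
          (Nat.mul_le_mul_right _ (natAbs_coeff_le_polyNorm F i))
    _ = F.support.card * polyNorm F * polyNorm G := by
        rw [Finset.sum_const, smul_eq_mul, mul_assoc]

theorem polyNorm_modByMonic_X_pow_le (F : ℤ[X]) (n : ℕ) : polyNorm (F %ₘ X ^ n) ≤ polyNorm F :=
  polyNorm_le_of_forall_natAbs_coeff_le fun i => by
    rw [coeff_modByMonic_X_pow]
    split_ifs
    · exact natAbs_coeff_le_polyNorm F i
    · simp

theorem polyNorm_divByMonic_X_pow_le (F : ℤ[X]) (n : ℕ) : polyNorm (F /ₘ X ^ n) ≤ polyNorm F :=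
  polyNorm_le_of_forall_natAbs_coeff_le fun i =>
    coeff_divByMonic_X_pow F n i ▸ natAbs_coeff_le_polyNorm F _

theorem polyNorm_eraseLead_le (F : ℤ[X]) : polyNorm F.eraseLead ≤ polyNorm F :=
  polyNorm_le_of_forall_natAbs_coeff_le fun i => by
    rw [eraseLead_coeff]
    split_ifs
    · simp
    · exact natAbs_coeff_le_polyNorm F i

theorem Polynomial.Monic.one_le_polyNorm {P : ℤ[X]} (hP : P.Monic) : 1 ≤ polyNorm P := by
  simpa [hP.coeff_natDegree] using natAbs_coeff_le_polyNorm P P.natDegree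

namespace Polynomial

variable {R : Type*} [CommRing R]

noncomputable def reduceOnce (P Q : R[X]) : R[X] :=
  Q %ₘ X ^ P.natDegree - P.eraseLead * (Q /ₘ X ^ P.natDegree)

theorem Monic.reduceOnce_modByMonic {P : R[X]} (hP : P.Monic) (Q : R[X]) :
    reduceOnce P Q %ₘ P = Q %ₘ P := by
  refine modByMonic_eq_of_dvd_sub hP ⟨-(Q /ₘ X ^ P.natDegree), ?_⟩
  rw [reduceOnce]
  linear_combination modByMonic_add_div Q (X ^ P.natDegree) +
    (Q /ₘ X ^ P.natDegree) * hP.sub_X_pow_natDegree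

theorem natDegree_reduceOnce_lt [Nontrivial R] {P Q : R[X]} {d m : ℕ} (hd : 0 < d)
    (hgap : P.eraseLead.natDegree + d ≤ P.natDegree) (hQ : Q.natDegree < P.natDegree + d + m) :
    (reduceOnce P Q).natDegree < P.natDegree + m := by
  have hX : X ^ P.natDegree ≠ (1 : R[X]) := fun h => by
    simpa [show P.natDegree ≠ 0 by omega] using congrArg natDegree h
  have hlow : (Q %ₘ X ^ P.natDegree).natDegree < P.natDegree := by
    simpa using natDegree_modByMonic_lt Q (monic_X_pow P.natDegree) hX
  have hhigh : (Q /ₘ X ^ P.natDegree).natDegree = Q.natDegree - P.natDegree := by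
    simp [natDegree_divByMonic Q (monic_X_pow P.natDegree)]
  have hmul := natDegree_mul_le (p := P.eraseLead) (q := Q /ₘ X ^ P.natDegree)
  have hsub := natDegree_sub_le (Q %ₘ X ^ P.natDegree) (P.eraseLead * (Q /ₘ X ^ P.natDegree))
  rw [reduceOnce]
  omega

end Polynomial

theorem polyNorm_reduceOnce_le {P : ℤ[X]} (hP : P.Monic) (Q : ℤ[X]) :
    polyNorm (reduceOnce P Q) ≤ polyNorm Q * (P.support.card * polyNorm P) := by
  have hcard := card_support_eraseLead_add_one hP.ne_zero
  calc polyNorm (reduceOnce P Q)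
      ≤ polyNorm Q + P.eraseLead.support.card * polyNorm P.eraseLead * polyNorm Q :=
        (polyNorm_sub_le _ _).trans (add_le_add (polyNorm_modByMonic_X_pow_le Q _)
          ((polyNorm_mul_le _ _).trans (Nat.mul_le_mul_left _ (polyNorm_divByMonic_X_pow_le Q _))))
    _ ≤ polyNorm Q * polyNorm P + P.eraseLead.support.card * polyNorm P * polyNorm Q := by
        gcongr
        · exact Nat.le_mul_of_pos_right _ hP.one_le_polyNorm
        · exact polyNorm_eraseLead_le P
    _ = polyNorm Q * (P.support.card * polyNorm P) := by rw [← hcard]; ring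

theorem polyNorm_modByMonic_le_of_natDegree_lt {P : ℤ[X]} (hP : P.Monic) {d : ℕ} (hd : 0 < d)
    (hgap : P.eraseLead.natDegree + d ≤ P.natDegree) (j : ℕ) {Q : ℤ[X]}
    (hQ : Q.natDegree < P.natDegree + j * d) :
    polyNorm (Q %ₘ P) ≤ polyNorm Q * (P.support.card * polyNorm P) ^ j := by
  induction j generalizing Q with
  | zero =>
    rw [(modByMonic_eq_self_iff hP).mpr (degree_lt_degree (by simpa using hQ)), pow_zero, mul_one]
  | succ j ih =>
    calc polyNorm (Q %ₘ P) = polyNorm (reduceOnce P Q %ₘ P) := by rw [hP.reduceOnce_modByMonic]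
      _ ≤ polyNorm (reduceOnce P Q) * (P.support.card * polyNorm P) ^ j :=
        ih (natDegree_reduceOnce_lt hd hgap (by linarith))
      _ ≤ polyNorm Q * (P.support.card * polyNorm P) ^ (j + 1) := by
        rw [pow_succ', ← mul_assoc]
        exact Nat.mul_le_mul_right _ (polyNorm_reduceOnce_le hP Q)

theorem norm_modByMonic_le_general (n k : ℕ) (γ : ℝ) (P Q : Polynomial ℤ)
    (hP : P.Monic) (hPdeg : P.natDegree = n)
    (hγ0 : 0 < γ)
    (hgap : ((P - X ^ n).natDegree : ℝ) ≤ (1 - γ) * n)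
    (hQ : Q.natDegree ≤ n - 1 + k) :
    polyNorm (Q %ₘ P) ≤
      polyNorm Q * (P.support.card * polyNorm P) ^ ⌈(k : ℝ) / (γ * n)⌉₊ := by
  rcases Nat.eq_zero_or_pos n with rfl | hn
  · simp [hP.natDegree_eq_zero.mp hPdeg]
  subst hPdeg
  rw [hP.sub_X_pow_natDegree] at hgap
  set d := P.natDegree - P.eraseLead.natDegree
  have hγd : γ * P.natDegree ≤ d := by
    rw [Nat.cast_sub (eraseLead_natDegree_le P |>.trans (Nat.sub_le _ _))]
    linarith
  have hγn : 0 < γ * P.natDegree := by positivity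
  have hd : 0 < d := by exact_mod_cast hγn.trans_le hγd
  have hk : k ≤ ⌈(k : ℝ) / (γ * P.natDegree)⌉₊ * d := by
    have hle := (div_le_iff₀ hγn).mp (Nat.le_ceil ((k : ℝ) / (γ * P.natDegree)))
    exact_mod_cast hle.trans (mul_le_mul_of_nonneg_left hγd (Nat.cast_nonneg _))
  exact polyNorm_modByMonic_le_of_natDegree_lt hP hd (by omega) _ (by omega)

theorem norm_modByMonic_le (n k : ℕ) (γ : ℝ) (P Q : Polynomial ℤ)
    (hP : P.Monic) (hPdeg : P.natDegree = n) (hPsp : 2 ≤ P.support.card)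
    (hγ0 : 0 < γ) (hγ1 : γ ≤ 1)
    (hgap : ((P - X ^ n).natDegree : ℝ) ≤ (1 - γ) * n)
    (hQ : Q.natDegree ≤ n - 1 + k) :
    polyNorm (Q %ₘ P) ≤
      polyNorm Q * (P.support.card * polyNorm P) ^ ⌈(k : ℝ) / (γ * n)⌉₊ :=
  norm_modByMonic_le_general n k γ P Q hP hPdeg hγ0 hgap hQ
end

section
/- Let R be a commutative ring, n ≥ 1, and F, G ∈ R[X] with deg F < n and deg G < n. Write F = Σ_{i<n} f_i X^i and G = Σ_{j<n} g_j X^j, and let α ∈ R. Define the sequence (c_j) by c_0 = F(α) and c_{j+1} = α·c_j − (α^n − 1)·f_{n−1−j} for 0 ≤ j ≤ n−2. Then the evaluation at α of the remainder (F·G) mod (X^n − 1) equals Σ_{j=0}^{n−1} c_j·g_j. -/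
/-!
Write `H j` for the remainder of `X ^ j * F` modulo `X ^ n - 1`, so that `(F * G) %ₘ (X ^ n - 1)`
is `∑ g_j • H j` by linearity of the remainder. For `j < n`, the coefficient of `X ^ (n - 1)` in
`H j` is `f_{n-1-j}`, and multiplying `H j` by `X` pushes exactly this coefficient past `X ^ n`,
so `H (j + 1) = X * H j - f_{n-1-j} • (X ^ n - 1)`. Evaluating at `α` gives the recursion
defining `c`, hence `(H j).eval α = c j`.
-/

open Polynomial Finset

namespace Polynomial

variable {R : Type*} [CommRing R] {n : ℕ}

lemma monic_X_pow_sub_one (hn : n ≠ 0) : (X ^ n - 1 : R[X]).Monic := by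
  simpa using monic_X_pow_sub_C (1 : R) hn

lemma degree_X_pow_sub_one [Nontrivial R] (hn : n ≠ 0) : (X ^ n - 1 : R[X]).degree = n := by
  simpa using degree_X_pow_sub_C (Nat.pos_of_ne_zero hn) (1 : R)

lemma modByMonic_X_pow_sub_one_eq_self (hn : n ≠ 0) {P : R[X]} (hP : P.degree < n) :
    P %ₘ (X ^ n - 1) = P := by
  nontriviality R
  exact (modByMonic_eq_self_iff (monic_X_pow_sub_one hn)).2 (by rwa [degree_X_pow_sub_one hn])

lemma X_mul_modByMonic_X_pow_sub_one (hn : n ≠ 0) {P : R[X]} (hP : P.degree < n) :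
    (X * P) %ₘ (X ^ n - 1) = X * P - C (P.coeff (n - 1)) * (X ^ n - 1) := by
  rw [modByMonic_eq_of_dvd_sub (monic_X_pow_sub_one hn)
      (p₂ := X * P - C (P.coeff (n - 1)) * (X ^ n - 1)) ⟨C (P.coeff (n - 1)), by ring⟩,
    modByMonic_X_pow_sub_one_eq_self hn]
  rw [degree_lt_iff_coeff_zero]
  intro m hm
  have hnm : n ≤ m := by exact_mod_cast hm
  obtain ⟨k, rfl⟩ : ∃ k, m = k + 1 := ⟨m - 1, by omega⟩
  rw [coeff_sub, coeff_X_mul, coeff_C_mul, coeff_sub, coeff_X_pow, coeff_one]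
  rcases hnm.eq_or_lt with hk | hk
  · rw [← hk, if_pos rfl, if_neg (by omega), show k = n - 1 by omega]
    ring
  · rw [if_neg (by omega), if_neg (by omega),
      coeff_eq_zero_of_degree_lt (hP.trans_le (by exact_mod_cast (by omega : n ≤ k)))]
    ring

lemma X_pow_succ_mul_modByMonic_X_pow_sub_one (hn : n ≠ 0) (F : R[X]) (j : ℕ) :
    (X ^ (j + 1) * F) %ₘ (X ^ n - 1) =
      X * ((X ^ j * F) %ₘ (X ^ n - 1)) -
        C (((X ^ j * F) %ₘ (X ^ n - 1)).coeff (n - 1)) * (X ^ n - 1) := by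
  nontriviality R
  have hq := monic_X_pow_sub_one (R := R) hn
  rw [← X_mul_modByMonic_X_pow_sub_one hn
    (degree_X_pow_sub_one (R := R) hn ▸ degree_modByMonic_lt _ hq)]
  refine modByMonic_eq_of_dvd_sub hq ?_
  rw [pow_succ', mul_assoc, ← mul_sub]
  exact dvd_mul_of_dvd_right (dvd_sub_comm.1 (dvd_modByMonic_sub _ _)) X

lemma coeff_X_pow_mul_modByMonic_X_pow_sub_one {F : R[X]} (hF : F.degree < n) {j k : ℕ}
    (hjk : j ≤ k) (hk : k < n) : ((X ^ j * F) %ₘ (X ^ n - 1)).coeff k = F.coeff (k - j) := by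
  induction j generalizing k with
  | zero => rw [pow_zero, one_mul, modByMonic_X_pow_sub_one_eq_self (by omega) hF, Nat.sub_zero]
  | succ j ih =>
    obtain ⟨k, rfl⟩ : ∃ k', k = k' + 1 := ⟨k - 1, by omega⟩
    rw [X_pow_succ_mul_modByMonic_X_pow_sub_one (by omega), coeff_sub, coeff_X_mul, coeff_C_mul,
      coeff_sub, coeff_X_pow, coeff_one, if_neg (by omega), if_neg (by omega),
      ih (by omega) (by omega), Nat.add_sub_add_right]
    ring

lemma eval_X_pow_succ_mul_modByMonic_X_pow_sub_one {F : R[X]} (hF : F.degree < n) {j : ℕ}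
    (hj : j < n) (α : R) :
    ((X ^ (j + 1) * F) %ₘ (X ^ n - 1)).eval α =
      α * ((X ^ j * F) %ₘ (X ^ n - 1)).eval α - (α ^ n - 1) * F.coeff (n - 1 - j) := by
  rw [X_pow_succ_mul_modByMonic_X_pow_sub_one (by omega),
    coeff_X_pow_mul_modByMonic_X_pow_sub_one hF (by omega) (by omega)]
  simp only [eval_sub, eval_mul, eval_X, eval_C, eval_pow, eval_one]
  ring

lemma mul_modByMonic_eq_sum_coeff_smul (F q : R[X]) {G : R[X]} (hG : G.degree < n) :
    (F * G) %ₘ q = ∑ j ∈ range n, G.coeff j • ((X ^ j * F) %ₘ q) := by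
  rcases eq_or_ne G 0 with rfl | hG0
  · simp
  have hFG : F * G = ∑ j ∈ range n, G.coeff j • (X ^ j * F) := by
    conv_lhs => rw [G.as_sum_range_C_mul_X_pow' ((natDegree_lt_iff_degree_lt hG0).2 hG), mul_sum]
    refine sum_congr rfl fun j _ => ?_
    rw [smul_eq_C_mul]
    ring
  simpa only [modByMonicHom_apply, map_sum, map_smul] using
    congrArg (modByMonicHom q) hFG

end Polynomial

theorem eval_modByMonic_pow_sub_one_general {R : Type*} [CommRing R] (n : ℕ)
    (F G : Polynomial R) (hF : F.degree < n) (hG : G.degree < n) (α : R)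
    (c : ℕ → R) (hc0 : c 0 = F.eval α)
    (hcrec : ∀ j < n - 1, c (j + 1) = α * c j - (α ^ n - 1) * F.coeff (n - 1 - j)) :
    ((F * G) %ₘ (X ^ n - 1)).eval α = ∑ j ∈ range n, c j * G.coeff j := by
  have hH : ∀ j < n, ((X ^ j * F) %ₘ (X ^ n - 1)).eval α = c j := by
    intro j hj
    induction j with
    | zero => rw [pow_zero, one_mul, modByMonic_X_pow_sub_one_eq_self (by omega) hF, hc0]
    | succ j ih =>
      rw [eval_X_pow_succ_mul_modByMonic_X_pow_sub_one hF (by omega), ih (by omega),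
        hcrec j (by omega)]
  rw [mul_modByMonic_eq_sum_coeff_smul F _ hG, eval_finsetSum]
  refine sum_congr rfl fun j hj => ?_
  rw [eval_smul, smul_eq_mul, hH j (mem_range.1 hj), mul_comm]

theorem eval_modByMonic_pow_sub_one {R : Type*} [CommRing R] (n : ℕ) (hn : 1 ≤ n)
    (F G : Polynomial R) (hF : F.degree < n) (hG : G.degree < n) (α : R)
    (c : ℕ → R) (hc0 : c 0 = F.eval α)
    (hcrec : ∀ j < n - 1, c (j + 1) = α * c j - (α ^ n - 1) * F.coeff (n - 1 - j)) :
    ((F * G) %ₘ (X ^ n - 1)).eval α = ∑ j ∈ range n, c j * G.coeff j :=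
  eval_modByMonic_pow_sub_one_general n F G hF hG α c hc0 hcrec
end

section
/- Let R be a commutative ring, P ∈ R[X] monic of degree n with at least 2 nonzero coefficients, and γ ∈ (0,1] such that the degree of P − X^n is at most (1−γ)·n. Let F ∈ R[X] with deg F < n, and for 0 ≤ i ≤ n−2 let F^{[i]} = (X^i·F) mod P. Then the number of indices i ∈ {0, …, n−2} such that the coefficient of X^{n−1} in F^{[i]} is nonzero is at most #F·(#P)^{⌈1/γ − 1⌉}. -/
/-!
Write `P = X ^ n + Q` with `deg Q ≤ (1 - γ) n`. The coefficient of `X ^ (n - 1)` in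
`X ^ i * F mod P` is a combination of the coefficients `c d` of `X ^ (n - 1)` in
`X ^ d mod P` for `d = i + a`, `a ∈ supp F`. Below `n` only `c (n - 1)` is nonzero, and above
`n` the relation `X ^ n ≡ -Q` expresses `c d` through the `c (d - (n - b))`, `b ∈ supp Q`,
each shift `n - b` being at least `γ n`. Hence every `d ≤ 2n - 3` with `c d ≠ 0` is `n - 1`
plus at most `k = ⌈1/γ - 1⌉` such shifts, and there are at most `(#Q + 1) ^ k ≤ #P ^ k` such
exponents.
-/

open Polynomial Finset
open scoped Pointwise

/-- The sums `r + s₁ + ⋯ + sⱼ` with `j ≤ m` and all `sᵢ ∈ S`. -/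
def sumsUpTo (r : ℕ) (S : Finset ℕ) : ℕ → Finset ℕ
  | 0 => {r}
  | m + 1 => insert r (sumsUpTo r S m + S)

theorem self_mem_sumsUpTo (r : ℕ) (S : Finset ℕ) (m : ℕ) : r ∈ sumsUpTo r S m := by
  cases m <;> simp [sumsUpTo]

theorem card_sumsUpTo_le (r : ℕ) (S : Finset ℕ) (m : ℕ) :
    (sumsUpTo r S m).card ≤ (S.card + 1) ^ m := by
  induction m with
  | zero => simp [sumsUpTo]
  | succ m ih =>
    calc (sumsUpTo r S (m + 1)).card ≤ (sumsUpTo r S m).card * S.card + 1 :=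
          (card_insert_le _ _).trans (by gcongr; exact card_add_le)
      _ ≤ (S.card + 1) ^ m * S.card + (S.card + 1) ^ m := by
          gcongr; exact Nat.one_le_pow _ _ (Nat.succ_pos _)
      _ = (S.card + 1) ^ (m + 1) := by ring

theorem mem_sumsUpTo_of_descent {Z : ℕ → Prop} {S : Finset ℕ} {n g : ℕ}
    (hS : ∀ s ∈ S, g ≤ s) (hsmall : ∀ d < n, Z d → d = n - 1)
    (hstep : ∀ d, n ≤ d → Z d → ∃ s ∈ S, s ≤ d ∧ Z (d - s)) (m : ℕ) {d : ℕ} (hZ : Z d)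
    (hd : d + 2 ≤ n + (m + 1) * g) : d ∈ sumsUpTo (n - 1) S m := by
  induction m generalizing d with
  | zero =>
    rcases lt_or_ge d n with hdn | hdn
    · rw [hsmall d hdn hZ]; exact self_mem_sumsUpTo _ _ _
    obtain ⟨s, hs, hsd, hZ'⟩ := hstep d hdn hZ
    have hgs := hS s hs
    have := hsmall (d - s) (by omega) hZ'
    omega
  | succ m ih =>
    rcases lt_or_ge d n with hdn | hdn
    · rw [hsmall d hdn hZ]; exact self_mem_sumsUpTo _ _ _
    obtain ⟨s, hs, hsd, hZ'⟩ := hstep d hdn hZ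
    have hgs := hS s hs
    have hd' : d - s + 2 ≤ n + (m + 1) * g := by rw [add_mul] at hd; omega
    exact mem_insert_of_mem <| mem_add.2 ⟨d - s, ih hZ' hd', s, hs, Nat.sub_add_cancel hsd⟩

theorem ncard_le_of_forall_exists_add_mem {s : Set ℕ} {A T : Finset ℕ}
    (h : ∀ i ∈ s, ∃ a ∈ A, i + a ∈ T) : s.ncard ≤ A.card * T.card := by
  have hsub : s ⊆ ↑(A.biUnion fun a => T.image (· - a)) := fun i hi => by
    obtain ⟨a, ha, hT⟩ := h i hi
    exact mem_biUnion.2 ⟨a, ha, mem_image.2 ⟨i + a, hT, Nat.add_sub_cancel i a⟩⟩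
  calc s.ncard ≤ (A.biUnion fun a => T.image (· - a)).card :=
        (Set.ncard_le_ncard hsub (finite_toSet _)).trans_eq (Set.ncard_coe_finset _)
    _ ≤ A.card * T.card := card_biUnion_le_card_mul _ _ _ fun _ _ => card_image_le

theorem le_ceil_inv_sub_one_add_one_mul {γ : ℝ} {n q : ℕ} (hγ : 0 < γ)
    (hq : (q : ℝ) ≤ (1 - γ) * n) : n ≤ (⌈1 / γ - 1⌉₊ + 1) * (n - q) := by
  have hqn : q ≤ n := by
    have : (q : ℝ) ≤ n := by nlinarith [(n.cast_nonneg : (0 : ℝ) ≤ n)]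
    exact_mod_cast this
  have hk : 1 ≤ ((⌈1 / γ - 1⌉₊ : ℝ) + 1) * γ := by
    have := Nat.le_ceil (1 / γ - 1)
    rw [← div_le_iff₀ hγ]; linarith
  suffices (n : ℝ) ≤ ((⌈1 / γ - 1⌉₊ : ℝ) + 1) * ((n - q : ℕ) : ℝ) by
    exact_mod_cast this
  rw [Nat.cast_sub hqn]
  nlinarith [(n.cast_nonneg : (0 : ℝ) ≤ n)]

namespace Polynomial

variable {R : Type*} [CommRing R]

theorem coeff_X_pow_mul_modByMonic (P G : R[X]) (e m : ℕ) :
    ((X ^ e * G) %ₘ P).coeff m =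
      ∑ b ∈ G.support, G.coeff b * (X ^ (e + b) %ₘ P).coeff m := by
  conv_lhs => rw [G.as_sum_support_C_mul_X_pow, Finset.mul_sum]
  rw [← modByMonicHom_apply, map_sum, finsetSum_coeff]
  refine sum_congr rfl fun b _ => ?_
  rw [mul_left_comm, ← pow_add, ← smul_eq_C_mul, map_smul, coeff_smul, smul_eq_mul,
    modByMonicHom_apply]

theorem exists_mem_support_of_coeff_X_pow_mul_modByMonic_ne_zero {P G : R[X]} {e m : ℕ}
    (h : ((X ^ e * G) %ₘ P).coeff m ≠ 0) :
    ∃ b ∈ G.support, (X ^ (e + b) %ₘ P).coeff m ≠ 0 := by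
  rw [coeff_X_pow_mul_modByMonic] at h
  obtain ⟨b, hb, hne⟩ := exists_ne_zero_of_sum_ne_zero h
  exact ⟨b, hb, right_ne_zero_of_mul hne⟩

theorem X_pow_add_modByMonic {P : R[X]} (hP : P.Monic) (e n : ℕ) :
    X ^ (e + n) %ₘ P = (X ^ e * (X ^ n - P)) %ₘ P :=
  modByMonic_eq_of_dvd_sub hP ⟨X ^ e, by ring⟩

theorem exists_mem_support_of_coeff_X_pow_modByMonic_ne_zero {P : R[X]} (hP : P.Monic)
    {n d m : ℕ} (hnd : n ≤ d) (h : (X ^ d %ₘ P).coeff m ≠ 0) :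
    ∃ b ∈ (P - X ^ n).support, (X ^ (d - n + b) %ₘ P).coeff m ≠ 0 := by
  rw [← Nat.sub_add_cancel hnd, X_pow_add_modByMonic hP] at h
  simpa only [← neg_sub P, support_neg] using
    exists_mem_support_of_coeff_X_pow_mul_modByMonic_ne_zero h

theorem eq_of_coeff_X_pow_modByMonic_ne_zero [Nontrivial R] {P : R[X]} (hP : P.Monic)
    {d m : ℕ} (hd : d < P.natDegree) (h : (X ^ d %ₘ P).coeff m ≠ 0) : m = d := by
  rw [(modByMonic_eq_self_iff hP).2, coeff_X_pow] at h
  · exact of_not_not fun hne => h (if_neg hne)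
  · rw [degree_X_pow, degree_eq_natDegree hP.ne_zero]; exact_mod_cast hd

theorem card_support_sub_X_pow_lt [Nontrivial R] {P : R[X]} (hP : P.Monic) {n : ℕ}
    (hPdeg : P.natDegree = n) : (P - X ^ n).support.card < P.support.card := by
  rw [← hPdeg, ← monomial_one_right_eq_X_pow, ← hP.leadingCoeff,
    self_sub_monomial_natDegree_leadingCoeff]
  exact eraseLead_support_card_lt hP.ne_zero

theorem mem_sumsUpTo_of_coeff_X_pow_modByMonic_ne_zero [Nontrivial R] {P : R[X]} (hP : P.Monic)
    {n : ℕ} (hPdeg : P.natDegree = n) (m : ℕ) {d : ℕ} (h : (X ^ d %ₘ P).coeff (n - 1) ≠ 0)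
    (hd : d + 2 ≤ n + (m + 1) * (n - (P - X ^ n).natDegree)) :
    d ∈ sumsUpTo (n - 1) ((P - X ^ n).support.image (n - ·)) m := by
  have hQn : (P - X ^ n).natDegree ≤ n :=
    (natDegree_sub_le _ _).trans (max_le hPdeg.le (natDegree_X_pow_le n))
  refine mem_sumsUpTo_of_descent (Z := fun d => (X ^ d %ₘ P).coeff (n - 1) ≠ 0) ?_ ?_ ?_ m h hd
  · simp only [mem_image]
    rintro _ ⟨b, hb, rfl⟩
    have := le_natDegree_of_mem_supp b hb
    omega
  · exact fun d hd hZ => (eq_of_coeff_X_pow_modByMonic_ne_zero hP (hPdeg ▸ hd) hZ).symm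
  · intro d hnd hZ
    obtain ⟨b, hb, hne⟩ := exists_mem_support_of_coeff_X_pow_modByMonic_ne_zero hP hnd hZ
    have := le_natDegree_of_mem_supp b hb
    refine ⟨n - b, mem_image_of_mem _ hb, by omega, ?_⟩
    rwa [show d - (n - b) = d - n + b by omega]

end Polynomial

theorem count_nonzero_leading_coeffs_le_general {R : Type*} [CommRing R] (n : ℕ) (γ : ℝ)
    (P F : Polynomial R) (hP : P.Monic) (hPdeg : P.natDegree = n)
    (hγ0 : 0 < γ)
    (hgap : ((P - X ^ n).natDegree : ℝ) ≤ (1 - γ) * n)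
    (hF : F.degree < n) :
    {i : ℕ | i < n - 1 ∧ ((X ^ i * F) %ₘ P).coeff (n - 1) ≠ 0}.ncard ≤
      F.support.card * P.support.card ^ ⌈1 / γ - 1⌉₊ := by
  nontriviality R
  set k := ⌈1 / γ - 1⌉₊
  have hk : n ≤ (k + 1) * (n - (P - X ^ n).natDegree) := le_ceil_inv_sub_one_add_one_mul hγ0 hgap
  calc _ ≤ F.support.card * (sumsUpTo (n - 1) ((P - X ^ n).support.image (n - ·)) k).card := by
        refine ncard_le_of_forall_exists_add_mem fun i ⟨hi, hne⟩ => ?_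
        obtain ⟨a, ha, hne⟩ := exists_mem_support_of_coeff_X_pow_mul_modByMonic_ne_zero hne
        have han : a < n := by
          exact_mod_cast (le_degree_of_ne_zero (mem_support_iff.1 ha)).trans_lt hF
        exact ⟨a, ha, mem_sumsUpTo_of_coeff_X_pow_modByMonic_ne_zero hP hPdeg k hne (by omega)⟩
    _ ≤ F.support.card * ((P - X ^ n).support.card + 1) ^ k := by
        gcongr
        exact (card_sumsUpTo_le _ _ _).trans <|
          Nat.pow_le_pow_left (Nat.succ_le_succ card_image_le) _
    _ ≤ F.support.card * P.support.card ^ k := by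
        gcongr
        exact card_support_sub_X_pow_lt hP hPdeg

theorem count_nonzero_leading_coeffs_le {R : Type*} [CommRing R] (n : ℕ) (γ : ℝ)
    (P F : Polynomial R) (hP : P.Monic) (hPdeg : P.natDegree = n)
    (hPsp : 2 ≤ P.support.card) (hγ0 : 0 < γ) (hγ1 : γ ≤ 1)
    (hgap : ((P - X ^ n).natDegree : ℝ) ≤ (1 - γ) * n)
    (hF : F.degree < n) :
    {i : ℕ | i < n - 1 ∧ ((X ^ i * F) %ₘ P).coeff (n - 1) ≠ 0}.ncard ≤
      F.support.card * P.support.card ^ ⌈1 / γ - 1⌉₊ :=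
  count_nonzero_leading_coeffs_le_general n γ P F hP hPdeg hγ0 hgap hF
end

section
/- Let F, G, H ∈ ℤ[X] with deg F ≤ n and deg G ≤ n, and suppose ‖F‖, ‖G‖, ‖H‖ ≤ C for some integer C ≥ 1. Let β be an integer with β ≥ 2(n+1)·C² + 2C + 1. Then H = F·G if and only if H(β) = F(β)·G(β). -/
open Polynomial

/-!
If `H(β) = F(β) G(β)`, then `β` is a root of `D = F G - H`. Every coefficient of `F G` is a sum of
at most `n + 1` products of a coefficient of `F` and one of `G`, so all coefficients of `D` are
smaller than `β` in absolute value. An integer polynomial with that property and root `β` is zero: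
`β` divides its constant coefficient, which is therefore `0`, and `D / X` again has root `β`.
-/

theorem abs_coeff_le_polyNorm (F : ℤ[X]) (i : ℕ) : |F.coeff i| ≤ polyNorm F := by
  rw [Int.abs_eq_natAbs, Nat.cast_le]
  by_cases hi : i ∈ F.support
  · exact Finset.le_sup (f := fun i => (F.coeff i).natAbs) hi
  · simp [notMem_support_iff.mp hi]

theorem abs_coeff_mul_le {F G : ℤ[X]} {n : ℕ} (hF : F.natDegree ≤ n) (k : ℕ) :
    |(F * G).coeff k| ≤ (n + 1) * ((polyNorm F : ℤ) * polyNorm G) := by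
  have hsum : (F * G).coeff k = ∑ i ∈ Finset.range (n + 1), F.coeff i * (X ^ i * G).coeff k := by
    conv_lhs => rw [F.as_sum_range_C_mul_X_pow' (Nat.lt_succ_of_le hF)]
    simp only [Finset.sum_mul, finsetSum_coeff, mul_assoc, coeff_C_mul]
  have hterm (i : ℕ) : |F.coeff i * (X ^ i * G).coeff k| ≤ (polyNorm F : ℤ) * polyNorm G := by
    have hG : |(X ^ i * G).coeff k| ≤ (polyNorm G : ℤ) := by
      rw [coeff_X_pow_mul']
      split_ifs
      · exact abs_coeff_le_polyNorm G _
      · simp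
    rw [abs_mul]
    exact mul_le_mul (abs_coeff_le_polyNorm F i) hG (abs_nonneg _) (Nat.cast_nonneg _)
  calc |(F * G).coeff k|
      ≤ ∑ i ∈ Finset.range (n + 1), |F.coeff i * (X ^ i * G).coeff k| :=
        hsum ▸ Finset.abs_sum_le_sum_abs _ _
    _ ≤ ∑ _i ∈ Finset.range (n + 1), (polyNorm F * polyNorm G : ℤ) :=
        Finset.sum_le_sum fun i _ => hterm i
    _ = (n + 1) * (polyNorm F * polyNorm G) := by simp

theorem eq_zero_of_isRoot_of_abs_coeff_lt {P : ℤ[X]} {β : ℤ} (hc : ∀ k, |P.coeff k| < |β|)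
    (hP : P.IsRoot β) : P = 0 := by
  by_contra hP0
  have hcoeff0 : P.coeff 0 = 0 :=
    Int.eq_zero_of_abs_lt_dvd ((abs_dvd _ _).mpr hP.dvd_coeff_zero) (hc 0)
  have hβ : β ≠ 0 := abs_pos.mp ((abs_nonneg _).trans_lt (hc 0))
  have hsplit : X * P.divX = P := by simpa [hcoeff0] using X_mul_divX_add P
  have hdivX : P.divX.IsRoot β := by
    have hroot := hP.eq_zero
    rw [← hsplit, eval_mul, eval_X] at hroot
    exact (mul_eq_zero.mp hroot).resolve_left hβ
  have hdivX0 : P.divX = 0 :=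
    eq_zero_of_isRoot_of_abs_coeff_lt (fun k => coeff_divX (p := P) ▸ hc (k + 1)) hdivX
  exact hP0 (by rw [← hsplit, hdivX0, mul_zero])
termination_by P.degree
decreasing_by exact degree_divX_lt hP0

theorem kronecker_substitution_verification_general (n C : ℕ)
    (F G H : Polynomial ℤ) (hF : F.natDegree ≤ n)
    (hFC : polyNorm F ≤ C) (hGC : polyNorm G ≤ C) (hHC : polyNorm H ≤ C)
    (β : ℤ) (hβ : 2 * (n + 1) * (C : ℤ) ^ 2 + 2 * C + 1 ≤ β) :
    H = F * G ↔ H.eval β = F.eval β * G.eval β := by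
  refine ⟨fun h => h ▸ eval_mul, fun hev => ?_⟩
  have hroot : (F * G - H).IsRoot β := by simp [IsRoot, hev]
  have hcoeff (k : ℕ) : |(F * G - H).coeff k| < |β| := by
    have hprod : (n + 1) * (polyNorm F * polyNorm G : ℤ) ≤ (n + 1) * (C * C) := by gcongr
    have hH : (polyNorm H : ℤ) ≤ C := by exact_mod_cast hHC
    calc |(F * G - H).coeff k| ≤ |(F * G).coeff k| + |H.coeff k| := by
          rw [coeff_sub]; exact abs_sub _ _
      _ < β := by
          nlinarith [abs_coeff_mul_le (G := G) hF k, abs_coeff_le_polyNorm H k]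
      _ ≤ |β| := le_abs_self β
  exact (sub_eq_zero.mp (eq_zero_of_isRoot_of_abs_coeff_lt hcoeff hroot)).symm

theorem kronecker_substitution_verification (n C : ℕ) (hC : 1 ≤ C)
    (F G H : Polynomial ℤ) (hF : F.natDegree ≤ n) (hG : G.natDegree ≤ n)
    (hFC : polyNorm F ≤ C) (hGC : polyNorm G ≤ C) (hHC : polyNorm H ≤ C)
    (β : ℤ) (hβ : 2 * (n + 1) * (C : ℤ) ^ 2 + 2 * C + 1 ≤ β) :
    H = F * G ↔ H.eval β = F.eval β * G.eval β :=
  kronecker_substitution_verification_general n C F G H hF hFC hGC hHC β hβ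
end

section
/- Let R be a nontrivial commutative ring and let M be a nonzero k × m matrix over R. Then the number of vectors u ∈ {0,1}^k ⊆ R^k such that the row-vector–matrix product u·M is the zero vector is at most 2^{k−1}. -/
/-!
If row `i₀` of `M` is nonzero, a `0/1`-vector `u` with `u ᵥ* M = 0` is determined by its
entries off `i₀`: two such vectors agreeing off `i₀` differ by `(u i₀ - v i₀) • M i₀`, and
`u i₀ - v i₀ ∈ {0, 1, -1}` must then be `0`. So the kernel vectors inject into `{0,1}^(k-1)`.
-/

open Matrix

def zeroOneCube (κ R : Type*) [Zero R] [One R] : Set (κ → R) := {f | ∀ i, f i = 0 ∨ f i = 1}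

section

variable {R : Type*} [Zero R] [One R]

lemma injOn_zeroOneCube_decide_eq_one {κ : Type*} [DecidableEq R] :
    Set.InjOn (fun f : κ → R => fun i => decide (f i = 1)) (zeroOneCube κ R) := by
  intro f hf g hg hfg
  funext i
  have hi := congrFun hfg i
  rcases hf i with hf0 | hf1 <;> rcases hg i with hg0 | hg1 <;> simp_all

lemma zeroOneCube_finite {κ : Type*} [Finite κ] : (zeroOneCube κ R).Finite := by
  classical
  exact Set.Finite.of_injOn (Set.mapsTo_univ _ _) injOn_zeroOneCube_decide_eq_one Set.finite_univ

lemma ncard_zeroOneCube_le {κ : Type*} [Fintype κ] :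
    (zeroOneCube κ R).ncard ≤ 2 ^ Fintype.card κ := by
  classical
  calc _ ≤ (Set.univ : Set (κ → Bool)).ncard :=
        Set.ncard_le_ncard_of_injOn _ (Set.mapsTo_univ _ _) injOn_zeroOneCube_decide_eq_one
    _ = 2 ^ Fintype.card κ := by simp [Set.ncard_univ]

end

section

variable {R : Type*} [Ring R]

lemma eq_of_zeroOne_of_sub_mul_eq_zero {a b c : R} (ha : a = 0 ∨ a = 1) (hb : b = 0 ∨ b = 1)
    (hc : c ≠ 0) (h : (a - b) * c = 0) : a = b := by
  rcases ha with rfl | rfl <;> rcases hb with rfl | rfl <;> simp_all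

variable {ι κ : Type*} [Fintype ι] [DecidableEq ι]

lemma vecMul_sub_vecMul_of_eq_off (M : Matrix ι κ R) {u v : ι → R} {i₀ : ι}
    (h : ∀ i ≠ i₀, u i = v i) : u ᵥ* M - v ᵥ* M = (u i₀ - v i₀) • M i₀ := by
  have huv : u - v = Pi.single i₀ (u i₀ - v i₀) := by
    funext i
    by_cases hi : i = i₀
    · subst hi; simp
    · simp [hi, h i hi]
  rw [← sub_vecMul, huv, single_vecMul, row]

lemma injOn_restrict_ne_of_row_ne_zero (M : Matrix ι κ R) {i₀ : ι} (hrow : M i₀ ≠ 0) :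
    Set.InjOn (fun u : ι → R => fun i : {i // i ≠ i₀} => u i)
      (zeroOneCube ι R ∩ {u | u ᵥ* M = 0}) := by
  rintro u ⟨hu01, hu⟩ v ⟨hv01, hv⟩ huv
  have hoff : ∀ i ≠ i₀, u i = v i := fun i hi => congrFun huv ⟨i, hi⟩
  obtain ⟨j, hj⟩ := Function.ne_iff.mp hrow
  have hdiff := congrFun (vecMul_sub_vecMul_of_eq_off M hoff) j
  rw [hu, hv, sub_zero, Pi.smul_apply, smul_eq_mul] at hdiff
  have hi₀ := eq_of_zeroOne_of_sub_mul_eq_zero (hu01 i₀) (hv01 i₀) hj hdiff.symm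
  funext i
  by_cases hi : i = i₀
  · exact hi ▸ hi₀
  · exact hoff i hi

end

theorem freivalds_count_general {R : Type*} [CommRing R] (k m : ℕ)
    (M : Matrix (Fin k) (Fin m) R) (hM : M ≠ 0) :
    {u : Fin k → R | (∀ i, u i = 0 ∨ u i = 1) ∧ Matrix.vecMul u M = 0}.ncard ≤
      2 ^ (k - 1) := by
  obtain ⟨i₀, hrow⟩ := Function.ne_iff.mp hM
  calc _ ≤ (zeroOneCube {i // i ≠ i₀} R).ncard :=
        Set.ncard_le_ncard_of_injOn _ (fun u hu i => hu.1 i)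
          (injOn_restrict_ne_of_row_ne_zero M hrow) zeroOneCube_finite
    _ ≤ 2 ^ Fintype.card {i // i ≠ i₀} := ncard_zeroOneCube_le
    _ = 2 ^ (k - 1) := by
        rw [Fintype.card_subtype_compl, Fintype.card_fin, Fintype.card_subtype_eq]

theorem freivalds_count {R : Type*} [CommRing R] [Nontrivial R] (k m : ℕ)
    (M : Matrix (Fin k) (Fin m) R) (hM : M ≠ 0) :
    {u : Fin k → R | (∀ i, u i = 0 ∨ u i = 1) ∧ Matrix.vecMul u M = 0}.ncard ≤
      2 ^ (k - 1) :=
  freivalds_count_general k m M hM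
end
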